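/- For the symmetric limited-magnitude channel over [q]^n, the weight assignment w_x = 1/(deg(x) - 1), where deg(x) = 2n + 1 - x^{-1}(0) - x^{-1}(q-1) is the size of the radius-1 ball around x, is a fractional transversal: for every x ∈ [q]^n, Σ_{y ∈ B_{S,q,1}(x)} w_y ≥ 1 (assuming n ≥ 1 and q ≥ 2 so that deg(x) ≥ 2). -/
import Mathlib


/-- `cnt x j` is the number of coordinates of `x ∈ [q]^n` equal to `j`. -/
def cnt {n q : ℕ} (x : Fin n → Fin q) (j : ℕ) : ℕ :=
  (Finset.univ.filter (fun i => (x i : ℕ) = j)).card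

/-- The size of the symmetric limited-magnitude radius-1 ball around `x`:
`deg(x) = 2n + 1 - x⁻¹(0) - x⁻¹(q-1)`. -/
noncomputable def degS {n q : ℕ} (x : Fin n → Fin q) : ℝ :=
  2 * (n : ℝ) + 1 - (cnt x 0 : ℝ) - (cnt x (q - 1) : ℝ)

/-- The symmetric limited-magnitude radius-1 ball `B_{S,q,1}(x)`: `x` together
with all vectors obtained by changing exactly one coordinate by `±1`. -/
def ballS {n q : ℕ} (x : Fin n → Fin q) : Finset (Fin n → Fin q) :=
  Finset.univ.filter (fun y => y = x ∨
    ∃ i, (∀ j, j ≠ i → y j = x j) ∧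
      ((y i : ℕ) = (x i : ℕ) + 1 ∨ (x i : ℕ) = (y i : ℕ) + 1))

open Finset

/-- `cnt x 0 + cnt x (q-1)` as the cardinality of a single filter. -/
lemma cnt_pair {n q : ℕ} (hq : 2 ≤ q) (x : Fin n → Fin q) :
    cnt x 0 + cnt x (q - 1) =
      (Finset.univ.filter (fun i => (x i : ℕ) = 0 ∨ (x i : ℕ) = q - 1)).card := by
  classical
  rw [Finset.filter_or, Finset.card_union_of_disjoint]
  · rfl
  · rw [Finset.disjoint_left]
    intro i hi hj
    simp only [Finset.mem_filter] at hi hj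
    omega

lemma cnt_pair_le {n q : ℕ} (hq : 2 ≤ q) (x : Fin n → Fin q) :
    cnt x 0 + cnt x (q - 1) ≤ n := by
  classical
  rw [cnt_pair hq]
  calc (Finset.univ.filter (fun i => (x i : ℕ) = 0 ∨ (x i : ℕ) = q - 1)).card
      ≤ (Finset.univ : Finset (Fin n)).card := Finset.card_filter_le _ _
    _ = n := by simp

/-- If `y` is in the ball around `x`, its combined count of extreme symbols
drops by at most one. -/
lemma cnt_pair_ball {n q : ℕ} (hq : 2 ≤ q) (x y : Fin n → Fin q)
    (hy : y ∈ ballS x) :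
    cnt x 0 + cnt x (q - 1) ≤ cnt y 0 + cnt y (q - 1) + 1 := by
  classical
  rw [ballS, Finset.mem_filter] at hy
  rcases hy.2 with rfl | ⟨i, hoff, _⟩
  · omega
  · rw [cnt_pair hq, cnt_pair hq]
    have hsub : (Finset.univ.filter (fun j => (x j : ℕ) = 0 ∨ (x j : ℕ) = q - 1))
        ⊆ insert i (Finset.univ.filter (fun j => (y j : ℕ) = 0 ∨ (y j : ℕ) = q - 1)) := by
      intro j hj
      by_cases hji : j = i
      · exact hji ▸ Finset.mem_insert_self _ _
      · refine Finset.mem_insert_of_mem ?_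
        simp only [Finset.mem_filter, Finset.mem_univ, true_and] at hj ⊢
        rw [hoff j hji]; exact hj
    calc (Finset.univ.filter (fun j => (x j : ℕ) = 0 ∨ (x j : ℕ) = q - 1)).card
        ≤ (insert i (Finset.univ.filter
            (fun j => (y j : ℕ) = 0 ∨ (y j : ℕ) = q - 1))).card :=
          Finset.card_le_card hsub
      _ ≤ _ + 1 := Finset.card_insert_le _ _

/-- The coordinate-sum of a vector, as an integer. -/
def csum {n q : ℕ} (y : Fin n → Fin q) : ℤ := ∑ i, ((y i : ℕ) : ℤ)

lemma csum_update {n q : ℕ} (x : Fin n → Fin q) (i : Fin n) (v : Fin q) :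
    csum (Function.update x i v) = csum x + (v : ℤ) - ((x i : ℕ) : ℤ) := by
  classical
  unfold csum
  have hpt : ∀ j, ((Function.update x i v j : ℕ) : ℤ)
      = Function.update (fun k => ((x k : ℕ) : ℤ)) i ((v : ℕ) : ℤ) j := by
    intro j
    by_cases h : j = i
    · subst h; simp
    · simp [Function.update_of_ne h]
  rw [Finset.sum_congr rfl (fun j _ => hpt j),
    Finset.sum_update_of_mem (Finset.mem_univ i)]
  have : (∑ j, ((x j : ℕ) : ℤ))
      = ((x i : ℕ) : ℤ) + ∑ j ∈ Finset.univ \ {i}, ((x j : ℕ) : ℤ) := by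
    rw [Finset.sum_eq_sum_sdiff_singleton_add (Finset.mem_univ i)]
    ring
  rw [this]; ring

/-- Lower bound on the size of the ball: `|B(x)| ≥ 2n + 1 - cnt₀ - cnt_{q-1}`
(stated additively to avoid truncated subtraction). -/
lemma ball_card_lb {n q : ℕ} (hq : 2 ≤ q) (x : Fin n → Fin q) :
    2 * n + 1 ≤ (ballS x).card + cnt x 0 + cnt x (q - 1) := by
  classical
  -- increment map
  set fA : Fin n → (Fin n → Fin q) := fun i =>
    Function.update x i (if h : (x i : ℕ) + 1 < q then ⟨(x i : ℕ) + 1, h⟩ else x i)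
    with hfA
  set fB : Fin n → (Fin n → Fin q) := fun i =>
    Function.update x i ⟨(x i : ℕ) - 1, lt_of_le_of_lt (Nat.sub_le _ _) (x i).isLt⟩
    with hfB
  set sA := Finset.univ.filter (fun i : Fin n => (x i : ℕ) + 1 < q) with hsA
  set sB := Finset.univ.filter (fun i : Fin n => 0 < (x i : ℕ)) with hsB
  set A := sA.image fA with hA
  set B := sB.image fB with hB
  -- coordinate sums
  have hAsum : ∀ y ∈ A, csum y = csum x + 1 := by
    intro y hy
    rw [hA, Finset.mem_image] at hy
    obtain ⟨i, hi, rfl⟩ := hy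
    rw [hsA, Finset.mem_filter] at hi
    rw [hfA]
    simp only [dif_pos hi.2]
    rw [csum_update]
    push_cast
    ring
  have hBsum : ∀ y ∈ B, csum y = csum x - 1 := by
    intro y hy
    rw [hB, Finset.mem_image] at hy
    obtain ⟨i, hi, rfl⟩ := hy
    rw [hsB, Finset.mem_filter] at hi
    rw [hfB, csum_update]
    have h1 : 1 ≤ (x i : ℕ) := hi.2
    have : (((x i : ℕ) - 1 : ℕ) : ℤ) = ((x i : ℕ) : ℤ) - 1 := by omega
    simp only [this]
    ring
  have hxA : x ∉ A := fun h => by have := hAsum x h; omega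
  have hxB : x ∉ B := fun h => by have := hBsum x h; omega
  have hAB : Disjoint A B := by
    rw [Finset.disjoint_left]
    intro y hyA hyB
    have := hAsum y hyA
    have := hBsum y hyB
    omega
  -- cardinalities of A and B
  have hcardA : A.card = sA.card := by
    rw [hA]
    apply Finset.card_image_of_injOn
    intro i hi j hj hij
    by_contra hne
    simp only [hsA, Finset.mem_coe, Finset.mem_filter] at hi
    have h1 : fA i i = fA j i := by rw [hij]
    rw [hfA] at h1
    simp only [Function.update_self, Function.update_of_ne hne] at h1
    rw [dif_pos hi.2] at h1
    have h2 := congrArg Fin.val h1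
    simp at h2
  have hcardB : B.card = sB.card := by
    rw [hB]
    apply Finset.card_image_of_injOn
    intro i hi j hj hij
    by_contra hne
    simp only [hsB, Finset.mem_coe, Finset.mem_filter] at hi
    have h1 : fB i i = fB j i := by rw [hij]
    rw [hfB] at h1
    simp only [Function.update_self, Function.update_of_ne hne] at h1
    have h2 : (x i : ℕ) - 1 = (x i : ℕ) := congrArg Fin.val h1
    have h3 : 0 < (x i : ℕ) := hi.2
    omega
  have hsAcard : sA.card + cnt x (q - 1) = n := by
    have : sA = Finset.univ.filter (fun i : Fin n => ¬ ((x i : ℕ) = q - 1)) := by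
      rw [hsA]
      apply Finset.filter_congr
      intro i _
      have := (x i).isLt
      constructor <;> intro h <;> simp_all <;> omega
    rw [this, cnt]
    have hh := Finset.card_filter_add_card_filter_not
      (p := fun i : Fin n => (x i : ℕ) = q - 1) (s := (Finset.univ : Finset (Fin n)))
    simp only [Finset.card_univ, Fintype.card_fin] at hh
    omega
  have hsBcard : sB.card + cnt x 0 = n := by
    have : sB = Finset.univ.filter (fun i : Fin n => ¬ ((x i : ℕ) = 0)) := by
      rw [hsB]
      apply Finset.filter_congr
      intro i _
      constructor <;> intro h <;> omega
    rw [this, cnt]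
    have hh := Finset.card_filter_add_card_filter_not
      (p := fun i : Fin n => (x i : ℕ) = 0) (s := (Finset.univ : Finset (Fin n)))
    simp only [Finset.card_univ, Fintype.card_fin] at hh
    omega
  -- T ⊆ ballS x
  have hxball : x ∈ ballS x := by
    rw [ballS, Finset.mem_filter]
    exact ⟨Finset.mem_univ _, Or.inl rfl⟩
  have hAball : A ⊆ ballS x := by
    intro y hy
    rw [hA, Finset.mem_image] at hy
    obtain ⟨i, hi, rfl⟩ := hy
    rw [hsA, Finset.mem_filter] at hi
    rw [ballS, Finset.mem_filter]
    refine ⟨Finset.mem_univ _, Or.inr ⟨i, fun j hj => ?_, Or.inl ?_⟩⟩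
    · rw [hfA]; exact Function.update_of_ne hj _ _
    · rw [hfA]; simp only [Function.update_self, dif_pos hi.2]
  have hBball : B ⊆ ballS x := by
    intro y hy
    rw [hB, Finset.mem_image] at hy
    obtain ⟨i, hi, rfl⟩ := hy
    rw [hsB, Finset.mem_filter] at hi
    rw [ballS, Finset.mem_filter]
    refine ⟨Finset.mem_univ _, Or.inr ⟨i, fun j hj => ?_, Or.inr ?_⟩⟩
    · rw [hfB]; exact Function.update_of_ne hj _ _
    · rw [hfB]
      simp only [Function.update_self]
      have : 0 < (x i : ℕ) := hi.2
      omega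
  have hTsub : insert x (A ∪ B) ⊆ ballS x := by
    intro y hy
    rcases Finset.mem_insert.mp hy with rfl | hy'
    · exact hxball
    · rcases Finset.mem_union.mp hy' with h | h
      · exact hAball h
      · exact hBball h
  have hTcard : (insert x (A ∪ B)).card = 1 + A.card + B.card := by
    rw [Finset.card_insert_of_notMem (by
      rw [Finset.mem_union]; rintro (h | h); exacts [hxA h, hxB h])]
    rw [Finset.card_union_of_disjoint hAB]
    ring
  have hle : (insert x (A ∪ B)).card ≤ (ballS x).card := Finset.card_le_card hTsub
  omega

/-- **Fractional transversal for the symmetric limited-magnitude channel.**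
The weight assignment `w_x = 1/(deg(x) - 1)` is a fractional transversal:
for every `x ∈ [q]^n`, `∑_{y ∈ B_{S,q,1}(x)} w_y ≥ 1`. -/
theorem sym_limited_magnitude_fractional_transversal (n q : ℕ)
    (hn : 1 ≤ n) (hq : 2 ≤ q) :
    ∀ x : Fin n → Fin q, 1 ≤ ∑ y ∈ ballS x, 1 / (degS y - 1) := by
  intro x
  have hdegpos : ∀ y : Fin n → Fin q, 0 < degS y - 1 := by
    intro y
    have h := cnt_pair_le hq y
    rw [degS]
    have h1 : (1 : ℝ) ≤ (n : ℝ) := by exact_mod_cast hn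
    have h2 : (cnt y 0 : ℝ) + (cnt y (q - 1) : ℝ) ≤ (n : ℝ) := by exact_mod_cast h
    linarith
  have hdegx_pos : 0 < degS x := by linarith [hdegpos x]
  have hle : ∀ y ∈ ballS x, degS y - 1 ≤ degS x := by
    intro y hy
    have h := cnt_pair_ball hq x y hy
    rw [degS, degS]
    have : (cnt x 0 : ℝ) + (cnt x (q - 1) : ℝ)
        ≤ (cnt y 0 : ℝ) + (cnt y (q - 1) : ℝ) + 1 := by exact_mod_cast h
    linarith
  have hterm : ∀ y ∈ ballS x, 1 / degS x ≤ 1 / (degS y - 1) := fun y hy =>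
    one_div_le_one_div_of_le (hdegpos y) (hle y hy)
  have hsum : (ballS x).card • (1 / degS x) ≤ ∑ y ∈ ballS x, 1 / (degS y - 1) :=
    Finset.card_nsmul_le_sum _ _ _ hterm
  have hcard : degS x ≤ ((ballS x).card : ℝ) := by
    have h := ball_card_lb hq x
    rw [degS]
    have : (2 * n + 1 : ℝ) ≤ ((ballS x).card : ℝ) + (cnt x 0 : ℝ) + (cnt x (q - 1) : ℝ) := by
      exact_mod_cast h
    linarith
  have h1 : (1 : ℝ) ≤ ((ballS x).card : ℝ) * (1 / degS x) := by
    rw [mul_one_div, le_div_iff₀ hdegx_pos, one_mul]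
    exact hcard
  calc (1 : ℝ) ≤ ((ballS x).card : ℝ) * (1 / degS x) := h1
    _ = (ballS x).card • (1 / degS x) := (nsmul_eq_mul _ _).symm
    _ ≤ _ := hsum
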